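/- arXiv:2504.06937 — 2 statements merged into one kernel-verified Lean document; each statement's English description precedes it below -/
import Mathlib

section
/- Fix positive reals γ_a, positive integers K, Q, m with K·J + Q relevant, and a positive integer J. The function f(μ₁, μ₂) = (KJ/2)·log₂(1 + μ₁γ_a) + (Q/2)·log₂(1 + J·μ₂·γ_a) subject to K·μ₁ + Q·μ₂ = m and μ₁, μ₂ ≥ 0 is maximized at μ₁ = J·m/(KJ + Q) and μ₂ = m/(KJ + Q), with maximum value ((KJ + Q)/2)·log₂(1 + J·m·γ_a/(KJ + Q)). In particular the optimal ratio μ₁/μ₂ equals J. -/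
open Real Set

theorem concaveOn_logb_Ioi {b : ℝ} (hb : 1 < b) : ConcaveOn ℝ (Ioi 0) (logb b) := by
  have hlogb : logb b = fun x => (log b)⁻¹ • log x := by
    ext x
    rw [smul_eq_mul, logb, div_eq_inv_mul]
  rw [hlogb]
  exact strictConcaveOn_log_Ioi.concaveOn.smul (inv_nonneg.mpr (log_pos hb).le)

theorem ConcaveOn.mul_add_mul_le {s : Set ℝ} {f : ℝ → ℝ} (hf : ConcaveOn ℝ s f)
    {a c x y : ℝ} (ha : 0 ≤ a) (hc : 0 ≤ c) (hac : 0 < a + c) (hx : x ∈ s) (hy : y ∈ s) :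
    a * f x + c * f y ≤ (a + c) * f ((a * x + c * y) / (a + c)) := by
  have hjensen := hf.2 hx hy (div_nonneg ha hac.le) (div_nonneg hc hac.le)
    (by rw [← add_div, div_self hac.ne'])
  simp only [smul_eq_mul] at hjensen
  have hmid : a / (a + c) * x + c / (a + c) * y = (a * x + c * y) / (a + c) := by ring
  rw [hmid] at hjensen
  calc a * f x + c * f y = (a + c) * (a / (a + c) * f x + c / (a + c) * f y) := by
        field_simp
    _ ≤ (a + c) * f ((a * x + c * y) / (a + c)) := by gcongr

theorem mu_fftdma_capacity_general (γ : ℝ) (hγ : 0 < γ) (m : ℝ) (hm : 0 < m)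
    (K Q J : ℕ) (hQ : 0 < Q) :
    (∀ μ₁ μ₂ : ℝ, 0 ≤ μ₁ → 0 ≤ μ₂ → (K : ℝ) * μ₁ + Q * μ₂ = m →
      ((K : ℝ) * J / 2) * Real.logb 2 (1 + μ₁ * γ) +
          ((Q : ℝ) / 2) * Real.logb 2 (1 + J * μ₂ * γ) ≤
        ((K : ℝ) * J + Q) / 2 *
          Real.logb 2 (1 + J * m * γ / ((K : ℝ) * J + Q))) ∧
    (K : ℝ) * ((J : ℝ) * m / ((K : ℝ) * J + Q)) + Q * (m / ((K : ℝ) * J + Q)) = m ∧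
    ((K : ℝ) * J / 2) * Real.logb 2 (1 + ((J : ℝ) * m / ((K : ℝ) * J + Q)) * γ) +
        ((Q : ℝ) / 2) * Real.logb 2 (1 + J * (m / ((K : ℝ) * J + Q)) * γ) =
      ((K : ℝ) * J + Q) / 2 * Real.logb 2 (1 + J * m * γ / ((K : ℝ) * J + Q)) ∧
    ((J : ℝ) * m / ((K : ℝ) * J + Q)) / (m / ((K : ℝ) * J + Q)) = J := by
  have hs : (0 : ℝ) < K * J + Q := by positivity
  refine ⟨fun μ₁ μ₂ h₁ h₂ hbudget => ?_, by field_simp, by ring_nf, by field_simp⟩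
  -- Jensen for `logb 2` with weights `KJ` and `Q`: the budget makes the weighted mean SNR `Jmγ/(KJ+Q)`.
  have hmean : ((K * J : ℝ) * (1 + μ₁ * γ) + Q * (1 + J * μ₂ * γ)) / (K * J + Q)
      = 1 + J * m * γ / (K * J + Q) := by
    rw [← hbudget]; field_simp; ring
  have hjensen := (concaveOn_logb_Ioi one_lt_two).mul_add_mul_le (by positivity)
    (Nat.cast_nonneg Q) hs (x := 1 + μ₁ * γ) (y := 1 + J * μ₂ * γ)
    (by positivity : (0 : ℝ) < _) (by positivity : (0 : ℝ) < _)
  rw [hmean] at hjensen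
  linarith

/-- Multiuser FF-TDMA capacity: under `K·μ₁ + Q·μ₂ = m`, the sum capacity
`(KJ/2)log₂(1+μ₁γ) + (Q/2)log₂(1+Jμ₂γ)` is maximized at
`μ₁ = J·m/(KJ+Q)`, `μ₂ = m/(KJ+Q)`, achieving
`((KJ+Q)/2)·log₂(1 + J·m·γ/(KJ+Q))`; the optimal ratio `μ₁/μ₂` equals `J`. -/
theorem mu_fftdma_capacity (γ : ℝ) (hγ : 0 < γ) (m : ℝ) (hm : 0 < m)
    (K Q J : ℕ) (hK : 0 < K) (hQ : 0 < Q) (hJ : 0 < J) :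
    (∀ μ₁ μ₂ : ℝ, 0 ≤ μ₁ → 0 ≤ μ₂ → (K : ℝ) * μ₁ + Q * μ₂ = m →
      ((K : ℝ) * J / 2) * Real.logb 2 (1 + μ₁ * γ) +
          ((Q : ℝ) / 2) * Real.logb 2 (1 + J * μ₂ * γ) ≤
        ((K : ℝ) * J + Q) / 2 *
          Real.logb 2 (1 + J * m * γ / ((K : ℝ) * J + Q))) ∧
    (K : ℝ) * ((J : ℝ) * m / ((K : ℝ) * J + Q)) + Q * (m / ((K : ℝ) * J + Q)) = m ∧
    ((K : ℝ) * J / 2) * Real.logb 2 (1 + ((J : ℝ) * m / ((K : ℝ) * J + Q)) * γ) +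
        ((Q : ℝ) / 2) * Real.logb 2 (1 + J * (m / ((K : ℝ) * J + Q)) * γ) =
      ((K : ℝ) * J + Q) / 2 * Real.logb 2 (1 + J * m * γ / ((K : ℝ) * J + Q)) ∧
    ((J : ℝ) * m / ((K : ℝ) * J + Q)) / (m / ((K : ℝ) * J + Q)) = J :=
  mu_fftdma_capacity_general γ hγ m hm K Q J hQ
end

section
/- Let S^1 and S^2 be the 3×2 complex matrices S^1 = [[1,1],[−1,1],[0,1]] and S^2 = [[−1,−1],[1,−1],[i,−1]], and let S^0 be the 3×2 zero matrix. For a digit vector d = (d_1,d_2,d_3) ∈ {0,1,2}^3 define r(d) ∈ ℂ^2 as the sum over j of row j of S^{d_j}. Then r is injective on {0,1,2}^3, i.e., the 27 complex sum-patterns are pairwise distinct. -/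
open Complex in
/-- The complex generator matrices of Example 7's 3-user ternary NO-CWEA code. -/
noncomputable def noCweaS : Fin 3 → Matrix (Fin 3) (Fin 2) ℂ :=
  ![!![0, 0; 0, 0; 0, 0],
    !![1, 1; -1, 1; 0, 1],
    !![-1, -1; 1, -1; Complex.I, -1]]

/-!
All entries of the generator matrices are Gaussian integers, and `GaussianInt → ℂ` is an injective
additive map, so the complex sum-patterns are distinct as soon as the Gaussian-integer ones are;
those are finitely many exact values and are compared by `decide`.
-/

open GaussianInt

section SumPattern

variable {K U N R R' : Type*} [Fintype U] [AddCommMonoid R] [AddCommMonoid R']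

def sumPattern (S : K → Matrix U N R) (d : U → K) : N → R :=
  fun i => ∑ j, S (d j) j i

lemma sumPattern_map (S : K → Matrix U N R) (f : R →+ R') :
    sumPattern (fun k => (S k).map f) = (f ∘ ·) ∘ sumPattern S := by
  funext d i
  simp [sumPattern]

lemma injective_sumPattern_map {S : K → Matrix U N R} {f : R →+ R'}
    (hf : Function.Injective f) (hS : Function.Injective (sumPattern S)) :
    Function.Injective (sumPattern (fun k => (S k).map f)) := by
  rw [sumPattern_map]
  exact hf.comp_left.comp hS

end SumPattern

def noCweaSGauss : Fin 3 → Matrix (Fin 3) (Fin 2) GaussianInt :=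
  ![!![0, 0; 0, 0; 0, 0],
    !![1, 1; -1, 1; 0, 1],
    !![-1, -1; 1, -1; Zsqrtd.sqrtd, -1]]

lemma noCweaS_eq_map : noCweaS = fun k => (noCweaSGauss k).map toComplex := by
  funext k j i
  fin_cases k <;> fin_cases j <;> fin_cases i <;>
    simp [noCweaS, noCweaSGauss, toComplex_def]

lemma injective_sumPattern_noCweaSGauss : Function.Injective (sumPattern noCweaSGauss) := by
  decide

/-- USPM constraint in the complex field for Example 7: the map sending a
digit vector `d ∈ {0,1,2}³` to the complex sum-pattern
`r(d) = Σⱼ (row j of S^{dⱼ})` is injective, i.e. the 27 complex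
sum-patterns are pairwise distinct. -/
theorem no_cwea_complex_uspm :
    Function.Injective
      (fun d : Fin 3 → Fin 3 => (fun i : Fin 2 => ∑ j : Fin 3, noCweaS (d j) j i)) := by
  change Function.Injective (sumPattern noCweaS)
  rw [noCweaS_eq_map]
  exact injective_sumPattern_map (f := toComplex.toAddMonoidHom) toComplex_injective
    injective_sumPattern_noCweaSGauss
end
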